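/- (RK under multiplicative noise.) Let A ∈ ℝ^{m×n}, E ∈ ℝ^{m×m}, F ∈ ℝ^{n×n} with I_m + E and I_n + F invertible, and set Ã := (I_m + E) A (I_n + F) and ΔA := EA + AF + EAF (so Ã = A + ΔA). Assume every row ã_i of Ã is nonzero. Let x_LS ∈ ℝ^n, b := A x_LS, ε ∈ ℝ^m, b̃ := b + ε, p_i := ‖ã_i‖²/‖Ã‖_F², and K_i(x) := x − ((⟨ã_i, x⟩ − b̃_i)/‖ã_i‖²) ã_i. Let σ > 0 satisfy ‖Ã z‖ ≥ σ‖z‖ for every z ∈ range(Ãᵀ), and let x_0 − x_LS ∈ range(Ãᵀ). Then for every k ≥ 0, Σ_{(i_1,…,i_k) ∈ {1,…,m}^k} p_{i_1}⋯p_{i_k} ‖K_{i_k}(⋯K_{i_1}(x_0)⋯) − x_LS‖² ≤ (1 − σ²/‖Ã‖_F²)^k ‖x_0 − x_LS‖² + ‖ΔA x_LS − ε‖²/σ². -/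

import Mathlib

/-!
A Kaczmarz step projects `x` onto the hyperplane `⟨ãᵢ, y⟩ = b̃ᵢ`, which misses `x_LS` by the
residual `rᵢ = ⟨ãᵢ, x_LS⟩ - b̃ᵢ = (ΔA x_LS - ε)ᵢ`. By Pythagoras, averaging over `i` with the
weights `pᵢ` gives, for `e = x - x_LS` in the row space of `Ã`,
`‖e‖² - ‖Ã e‖² / ‖Ã‖_F² + ‖r‖² / ‖Ã‖_F² ≤ α ‖e‖² + ‖r‖² / ‖Ã‖_F²` with `α = 1 - σ² / ‖Ã‖_F²`.
Conditioning on the first `k` indices, the bound `αᵏ ‖e₀‖² + ‖r‖² / σ²` therefore passes from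
`k` to `k + 1`, because `(1 - α) ‖r‖² / σ² = ‖r‖² / ‖Ã‖_F²`.
-/

open Matrix
open scoped RealInnerProductSpace

/-- The `i`-th row of a matrix, viewed as a vector in Euclidean space. -/
noncomputable def row {m n : ℕ} (M : Matrix (Fin m) (Fin n) ℝ) (i : Fin m) :
    EuclideanSpace ℝ (Fin n) :=
  (WithLp.equiv 2 (Fin n → ℝ)).symm (M i)

/-- Matrix-vector multiplication as a map between Euclidean spaces. -/
noncomputable def mulVecE {m n : ℕ} (M : Matrix (Fin m) (Fin n) ℝ)
    (x : EuclideanSpace ℝ (Fin n)) : EuclideanSpace ℝ (Fin m) :=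
  Matrix.toEuclideanLin M x

/-- The Kaczmarz update of `x` for the system `M y = c`, using row `i`:
`x ↦ x - ((⟨mᵢ, x⟩ - cᵢ)/‖mᵢ‖²) mᵢ`. -/
noncomputable def kaczmarz {m n : ℕ} (M : Matrix (Fin m) (Fin n) ℝ) (c : Fin m → ℝ) (i : Fin m)
    (x : EuclideanSpace ℝ (Fin n)) : EuclideanSpace ℝ (Fin n) :=
  x - ((⟪_root_.row M i, x⟫ - c i) / ‖_root_.row M i‖ ^ 2) • _root_.row M i

/-- Iterated Kaczmarz updates along the index sequence `is = (i₁, …, i_k)`,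
applying row `i₁` first: `K_{i_k}(⋯ K_{i₁}(x₀) ⋯)`. -/
noncomputable def kaczmarzIter {m n k : ℕ} (M : Matrix (Fin m) (Fin n) ℝ) (c : Fin m → ℝ)
    (is : Fin k → Fin m) (x0 : EuclideanSpace ℝ (Fin n)) : EuclideanSpace ℝ (Fin n) :=
  (List.ofFn is).foldl (fun x i => kaczmarz M c i x) x0

/-- The squared Frobenius norm `‖M‖_F² = Σ_{i,j} M_{ij}²`. -/
noncomputable def frobSq {m n : ℕ} (M : Matrix (Fin m) (Fin n) ℝ) : ℝ :=
  ∑ i, ∑ j, (M i j) ^ 2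

/-- The row space `range(Mᵀ)` of a matrix, as a submodule of Euclidean space. -/
noncomputable def rowSpace {m n : ℕ} (M : Matrix (Fin m) (Fin n) ℝ) :
    Submodule ℝ (EuclideanSpace ℝ (Fin n)) :=
  LinearMap.range (Matrix.toEuclideanLin Mᵀ)

/-- The spectral norm (operator 2-norm) of a matrix. -/
noncomputable def specNorm {m n : ℕ} (M : Matrix (Fin m) (Fin n) ℝ) : ℝ :=
  ‖LinearMap.toContinuousLinearMap (Matrix.toEuclideanLin M)‖

noncomputable def rowProb {m n : ℕ} (M : Matrix (Fin m) (Fin n) ℝ) (i : Fin m) : ℝ :=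
  ‖_root_.row M i‖ ^ 2 / frobSq M
lemma norm_sub_div_smul_sub_sq {E : Type*} [NormedAddCommGroup E] [InnerProductSpace ℝ E]
    {a : E} (ha : a ≠ 0) (x y : E) (β : ℝ) :
    ‖x - ((⟪a, x⟫ - β) / ‖a‖ ^ 2) • a - y‖ ^ 2
      = ‖x - y‖ ^ 2 - ⟪a, x - y⟫ ^ 2 / ‖a‖ ^ 2 + (⟪a, y⟫ - β) ^ 2 / ‖a‖ ^ 2 := by
  have ha' : ‖a‖ ≠ 0 := norm_ne_zero_iff.mpr ha
  have hsplit : ⟪a, x⟫ - β = ⟪a, x - y⟫ + (⟪a, y⟫ - β) := by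
    rw [inner_sub_right]; ring
  rw [sub_right_comm, hsplit, norm_sub_sq_real, real_inner_smul_right, real_inner_comm a,
    norm_smul, mul_pow, Real.norm_eq_abs, sq_abs]
  field_simp
  ring

section
variable {m n : ℕ} (M : Matrix (Fin m) (Fin n) ℝ)

lemma inner_row_eq_mulVecE_apply (x : EuclideanSpace ℝ (Fin n)) (i : Fin m) :
    ⟪_root_.row M i, x⟫ = mulVecE M x i := by
  simp [_root_.row, mulVecE, PiLp.inner_apply, Matrix.mulVec, dotProduct, mul_comm]

lemma frobSq_eq_sum_norm_row_sq : frobSq M = ∑ i, ‖_root_.row M i‖ ^ 2 := by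
  simp [frobSq, EuclideanSpace.real_norm_sq_eq, _root_.row]

lemma norm_mulVecE_sq (z : EuclideanSpace ℝ (Fin n)) :
    ‖mulVecE M z‖ ^ 2 = ∑ i, ⟪_root_.row M i, z⟫ ^ 2 := by
  simp only [EuclideanSpace.real_norm_sq_eq, inner_row_eq_mulVecE_apply]

lemma frobSq_nonneg : 0 ≤ frobSq M := by unfold frobSq; positivity

lemma norm_row_sq_le_frobSq (i : Fin m) : ‖_root_.row M i‖ ^ 2 ≤ frobSq M := by
  rw [frobSq_eq_sum_norm_row_sq]
  exact Finset.single_le_sum (fun j _ => sq_nonneg ‖_root_.row M j‖) (Finset.mem_univ i)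

lemma norm_mulVecE_sq_le (z : EuclideanSpace ℝ (Fin n)) :
    ‖mulVecE M z‖ ^ 2 ≤ frobSq M * ‖z‖ ^ 2 := by
  rw [norm_mulVecE_sq, frobSq_eq_sum_norm_row_sq, Finset.sum_mul]
  gcongr with i
  rw [← mul_pow, ← sq_abs]
  gcongr
  exact abs_real_inner_le_norm _ _

lemma rowProb_nonneg (i : Fin m) : 0 ≤ rowProb M i :=
  div_nonneg (sq_nonneg _) (frobSq_nonneg M)

-- Only `≤`, so that the empty system `m = 0`, where `frobSq M = 0`, needs no separate case.
lemma sum_rowProb_le_one : ∑ i, rowProb M i ≤ 1 := by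
  simp only [rowProb, ← Finset.sum_div, ← frobSq_eq_sum_norm_row_sq]
  exact div_self_le_one _

lemma row_mem_rowSpace (i : Fin m) : _root_.row M i ∈ rowSpace M := by
  refine ⟨WithLp.toLp 2 (Pi.single i 1), ?_⟩
  ext j
  simp [_root_.row, Matrix.mulVec, dotProduct, Pi.single_apply]

lemma kaczmarz_sub_mem_rowSpace (c : Fin m → ℝ) (i : Fin m) {x xLS : EuclideanSpace ℝ (Fin n)}
    (hx : x - xLS ∈ rowSpace M) : kaczmarz M c i x - xLS ∈ rowSpace M := by
  rw [kaczmarz, sub_right_comm]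
  exact Submodule.sub_mem _ hx (Submodule.smul_mem _ _ (row_mem_rowSpace M i))

lemma kaczmarzIter_sub_mem_rowSpace (c : Fin m → ℝ) {k : ℕ} (is : Fin k → Fin m)
    {x0 xLS : EuclideanSpace ℝ (Fin n)} (hx0 : x0 - xLS ∈ rowSpace M) :
    kaczmarzIter M c is x0 - xLS ∈ rowSpace M := by
  rw [kaczmarzIter]
  induction List.ofFn is generalizing x0 with
  | nil => exact hx0
  | cons i l ih => exact ih (kaczmarz_sub_mem_rowSpace M c i hx0)

lemma kaczmarzIter_snoc (c : Fin m → ℝ) {k : ℕ} (is : Fin k → Fin m) (i : Fin m)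
    (x0 : EuclideanSpace ℝ (Fin n)) :
    kaczmarzIter M c (Fin.snoc is i) x0 = kaczmarz M c i (kaczmarzIter M c is x0) := by
  rw [kaczmarzIter, kaczmarzIter, List.ofFn_succ']
  simp

lemma sum_prod_rowProb_le_one (k : ℕ) : ∑ is : Fin k → Fin m, ∏ j, rowProb M (is j) ≤ 1 := by
  rw [← Fintype.prod_sum]
  exact Finset.prod_le_one (fun _ _ => Finset.sum_nonneg fun i _ => rowProb_nonneg M i)
    fun _ _ => sum_rowProb_le_one M

lemma sum_prod_rowProb_mul_kaczmarzIter_succ (c : Fin m → ℝ) {k : ℕ}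
    (g : EuclideanSpace ℝ (Fin n) → ℝ) (x0 : EuclideanSpace ℝ (Fin n)) :
    ∑ is : Fin (k + 1) → Fin m, (∏ j, rowProb M (is j)) * g (kaczmarzIter M c is x0)
      = ∑ is : Fin k → Fin m, (∏ j, rowProb M (is j)) *
          ∑ i, rowProb M i * g (kaczmarz M c i (kaczmarzIter M c is x0)) := by
  rw [← (Fin.snocEquiv fun _ => Fin m).sum_comp, Fintype.sum_prod_type_right]
  refine Finset.sum_congr rfl fun is _ => ?_
  rw [Finset.mul_sum]
  refine Finset.sum_congr rfl fun i _ => ?_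
  have hsnoc : (Fin.snocEquiv fun _ => Fin m) (i, is) = Fin.snoc is i := rfl
  rw [hsnoc, kaczmarzIter_snoc, Fin.prod_univ_castSucc]
  simp only [Fin.snoc_castSucc, Fin.snoc_last]
  ring

variable {σ : ℝ} (hσ : 0 ≤ σ) (hσM : ∀ z ∈ rowSpace M, σ * ‖z‖ ≤ ‖mulVecE M z‖)
include hσ hσM

lemma sq_mul_norm_sq_le_norm_mulVecE_sq {z : EuclideanSpace ℝ (Fin n)} (hz : z ∈ rowSpace M) :
    σ ^ 2 * ‖z‖ ^ 2 ≤ ‖mulVecE M z‖ ^ 2 := by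
  rw [← mul_pow]
  exact pow_le_pow_left₀ (by positivity) (hσM z hz) 2

lemma sq_le_frobSq {i : Fin m} (hi : _root_.row M i ≠ 0) : σ ^ 2 ≤ frobSq M := by
  have hz : 0 < ‖_root_.row M i‖ ^ 2 := by positivity
  refine le_of_mul_le_mul_right ?_ hz
  exact (sq_mul_norm_sq_le_norm_mulVecE_sq M hσ hσM (row_mem_rowSpace M i)).trans
    (norm_mulVecE_sq_le M _)

variable (hrow : ∀ i, _root_.row M i ≠ 0)
include hrow

lemma one_sub_div_frobSq_nonneg : 0 ≤ 1 - σ ^ 2 / frobSq M := by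
  rcases isEmpty_or_nonempty (Fin m) with hm | ⟨⟨i⟩⟩
  · simp [frobSq]
  · rw [sub_nonneg]
    exact div_le_one_of_le₀ (sq_le_frobSq M hσ hσM (hrow i)) (frobSq_nonneg M)

lemma sum_rowProb_mul_norm_kaczmarz_sub_sq_le (c : Fin m → ℝ) {x xLS : EuclideanSpace ℝ (Fin n)}
    (hx : x - xLS ∈ rowSpace M) :
    ∑ i, rowProb M i * ‖kaczmarz M c i x - xLS‖ ^ 2
      ≤ (1 - σ ^ 2 / frobSq M) * ‖x - xLS‖ ^ 2
        + ‖mulVecE M xLS - WithLp.toLp 2 c‖ ^ 2 / frobSq M := by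
  set r := mulVecE M xLS - WithLp.toLp 2 c
  have hterm : ∀ i, rowProb M i * ‖kaczmarz M c i x - xLS‖ ^ 2
      = rowProb M i * ‖x - xLS‖ ^ 2 - ⟪_root_.row M i, x - xLS⟫ ^ 2 / frobSq M
        + r i ^ 2 / frobSq M := by
    intro i
    have ha : ‖_root_.row M i‖ ≠ 0 := norm_ne_zero_iff.mpr (hrow i)
    have hΦ : 0 < frobSq M :=
      (pow_pos (norm_pos_iff.mpr (hrow i)) 2).trans_le (norm_row_sq_le_frobSq M i)
    rw [rowProb, kaczmarz, norm_sub_div_smul_sub_sq (hrow i), PiLp.sub_apply,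
      ← inner_row_eq_mulVecE_apply, PiLp.toLp_apply]
    field_simp
  calc ∑ i, rowProb M i * ‖kaczmarz M c i x - xLS‖ ^ 2
      = (∑ i, rowProb M i) * ‖x - xLS‖ ^ 2 - ‖mulVecE M (x - xLS)‖ ^ 2 / frobSq M
          + ‖r‖ ^ 2 / frobSq M := by
        rw [Finset.sum_congr rfl fun i _ => hterm i, norm_mulVecE_sq,
          EuclideanSpace.real_norm_sq_eq r, Finset.sum_add_distrib, Finset.sum_sub_distrib,
          Finset.sum_mul, Finset.sum_div, Finset.sum_div]
    _ ≤ 1 * ‖x - xLS‖ ^ 2 - σ ^ 2 * ‖x - xLS‖ ^ 2 / frobSq M + ‖r‖ ^ 2 / frobSq M := by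
        have := frobSq_nonneg M
        gcongr
        · exact sum_rowProb_le_one M
        · exact sq_mul_norm_sq_le_norm_mulVecE_sq M hσ hσM hx
    _ = (1 - σ ^ 2 / frobSq M) * ‖x - xLS‖ ^ 2 + ‖r‖ ^ 2 / frobSq M := by ring

theorem sum_prod_rowProb_mul_norm_kaczmarzIter_sub_sq_le (c : Fin m → ℝ) (hσ₀ : σ ≠ 0)
    {x0 xLS : EuclideanSpace ℝ (Fin n)} (hx0 : x0 - xLS ∈ rowSpace M) (k : ℕ) :
    ∑ is : Fin k → Fin m,
        (∏ j, rowProb M (is j)) * ‖kaczmarzIter M c is x0 - xLS‖ ^ 2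
      ≤ (1 - σ ^ 2 / frobSq M) ^ k * ‖x0 - xLS‖ ^ 2
        + ‖mulVecE M xLS - WithLp.toLp 2 c‖ ^ 2 / σ ^ 2 := by
  set α := 1 - σ ^ 2 / frobSq M
  set R := ‖mulVecE M xLS - WithLp.toLp 2 c‖ ^ 2
  have hα : 0 ≤ α := one_sub_div_frobSq_nonneg M hσ hσM hrow
  induction k with
  | zero => simp [kaczmarzIter]; positivity
  | succ k ih =>
    rw [sum_prod_rowProb_mul_kaczmarzIter_succ M c fun x => ‖x - xLS‖ ^ 2]
    calc ∑ is : Fin k → Fin m, (∏ j, rowProb M (is j)) *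
          ∑ i, rowProb M i * ‖kaczmarz M c i (kaczmarzIter M c is x0) - xLS‖ ^ 2
        ≤ ∑ is : Fin k → Fin m, (∏ j, rowProb M (is j)) *
            (α * ‖kaczmarzIter M c is x0 - xLS‖ ^ 2 + R / frobSq M) := by
          gcongr with is
          · exact Finset.prod_nonneg fun j _ => rowProb_nonneg M (is j)
          · exact sum_rowProb_mul_norm_kaczmarz_sub_sq_le M hσ hσM hrow c
              (kaczmarzIter_sub_mem_rowSpace M c is hx0)
      _ = α * ∑ is : Fin k → Fin m,
              (∏ j, rowProb M (is j)) * ‖kaczmarzIter M c is x0 - xLS‖ ^ 2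
            + (∑ is : Fin k → Fin m, ∏ j, rowProb M (is j)) * (R / frobSq M) := by
          rw [Finset.mul_sum, Finset.sum_mul, ← Finset.sum_add_distrib]
          exact Finset.sum_congr rfl fun is _ => by ring
      _ ≤ α * (α ^ k * ‖x0 - xLS‖ ^ 2 + R / σ ^ 2) + 1 * (R / frobSq M) := by
          have : 0 ≤ R / frobSq M := div_nonneg (sq_nonneg _) (frobSq_nonneg M)
          gcongr
          exact sum_prod_rowProb_le_one M k
      _ = α ^ (k + 1) * ‖x0 - xLS‖ ^ 2 + R / σ ^ 2 := by
          rw [← div_mul_div_cancel₀' (pow_ne_zero 2 hσ₀) (frobSq M) R]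
          ring

end

theorem rk_doubly_noisy_multiplicative_general {m n : ℕ}
    (A : Matrix (Fin m) (Fin n) ℝ)
    (E : Matrix (Fin m) (Fin m) ℝ) (F : Matrix (Fin n) (Fin n) ℝ)
    (Atil ΔA : Matrix (Fin m) (Fin n) ℝ)
    (hAtil : Atil = (1 + E) * A * (1 + F))
    (hΔA : ΔA = E * A + A * F + E * A * F)
    (hrow : ∀ i, _root_.row Atil i ≠ 0)
    (xLS : EuclideanSpace ℝ (Fin n)) (ε : EuclideanSpace ℝ (Fin m))
    (σ : ℝ) (hσ : 0 < σ)
    (hσA : ∀ z ∈ rowSpace Atil, σ * ‖z‖ ≤ ‖mulVecE Atil z‖)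
    (x0 : EuclideanSpace ℝ (Fin n)) (hx0 : x0 - xLS ∈ rowSpace Atil)
    (k : ℕ) :
    ∑ is : Fin k → Fin m,
        (∏ j, ‖_root_.row Atil (is j)‖ ^ 2 / frobSq Atil) *
          ‖kaczmarzIter Atil (fun j => mulVecE A xLS j + ε j) is x0 - xLS‖ ^ 2
      ≤ (1 - σ ^ 2 / frobSq Atil) ^ k * ‖x0 - xLS‖ ^ 2
        + ‖mulVecE ΔA xLS - ε‖ ^ 2 / σ ^ 2 := by
  have hsplit : Atil = A + ΔA := by
    rw [hAtil, hΔA]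
    simp only [Matrix.add_mul, Matrix.mul_add, Matrix.one_mul, Matrix.mul_one]
    abel
  have hresidual : mulVecE Atil xLS - WithLp.toLp 2 (fun j => mulVecE A xLS j + ε j)
      = mulVecE ΔA xLS - ε := by
    ext i
    simp [mulVecE, hsplit]
  have h := sum_prod_rowProb_mul_norm_kaczmarzIter_sub_sq_le Atil hσ.le hσA hrow
    (fun j => mulVecE A xLS j + ε j) hσ.ne' hx0 k
  rwa [hresidual] at h

/-- Randomized Kaczmarz under multiplicative noise:
`Ã = (I + E) A (I + F) = A + ΔA` with `ΔA = EA + AF + EAF`, `I + E` and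
`I + F` invertible, applied to `Ã x ≈ b̃` where `b = A x_LS`, `b̃ = b + ε`.
The left-hand side is the expectation `E‖x_k - x_LS‖²`. -/
theorem rk_doubly_noisy_multiplicative {m n : ℕ}
    (A : Matrix (Fin m) (Fin n) ℝ)
    (E : Matrix (Fin m) (Fin m) ℝ) (F : Matrix (Fin n) (Fin n) ℝ)
    (hE : IsUnit (1 + E)) (hF : IsUnit (1 + F))
    (Atil ΔA : Matrix (Fin m) (Fin n) ℝ)
    (hAtil : Atil = (1 + E) * A * (1 + F))
    (hΔA : ΔA = E * A + A * F + E * A * F)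
    (hrow : ∀ i, _root_.row Atil i ≠ 0)
    (xLS : EuclideanSpace ℝ (Fin n)) (ε : EuclideanSpace ℝ (Fin m))
    (σ : ℝ) (hσ : 0 < σ)
    (hσA : ∀ z ∈ rowSpace Atil, σ * ‖z‖ ≤ ‖mulVecE Atil z‖)
    (x0 : EuclideanSpace ℝ (Fin n)) (hx0 : x0 - xLS ∈ rowSpace Atil)
    (k : ℕ) :
    ∑ is : Fin k → Fin m,
        (∏ j, ‖_root_.row Atil (is j)‖ ^ 2 / frobSq Atil) *
          ‖kaczmarzIter Atil (fun j => mulVecE A xLS j + ε j) is x0 - xLS‖ ^ 2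
      ≤ (1 - σ ^ 2 / frobSq Atil) ^ k * ‖x0 - xLS‖ ^ 2
        + ‖mulVecE ΔA xLS - ε‖ ^ 2 / σ ^ 2 :=
  rk_doubly_noisy_multiplicative_general A E F Atil ΔA hAtil hΔA hrow xLS ε σ hσ hσA x0 hx0 k
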